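/- arXiv:0710.2836 — 2 statements merged into one kernel-verified Lean document; each statement's English description precedes it below -/
import Mathlib

section
/- Let (M, d) be a compact metric space, f : M → M a minimal homeomorphism, ε > 0, and L ∈ ℕ such that for all x, y ∈ M there exists an integer l with 0 ≤ l ≤ L and f^l(y) ∈ B(x, ε). Then for every f-ergodic Borel probability measure μ and every x ∈ M, μ(B(x, ε)) ≥ 1/(L+1) > 0. -/
open MeasureTheory Set

/-! If every orbit enters `B(x, ε)` within `L` steps, the sets `f^[l] ⁻¹' B(x, ε)`, `l ≤ L`, cover
`M`; they all have measure `μ (B(x, ε))` by invariance, so `1 ≤ (L + 1) μ (B(x, ε))`. -/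

theorem MeasureTheory.MeasurePreserving.measure_univ_le_mul_of_forall_exists_iterate_mem
    {α : Type*} [MeasurableSpace α] {μ : Measure α} {f : α → α} (hf : MeasurePreserving f μ μ)
    {s : Set α} (hs : NullMeasurableSet s μ) (L : ℕ) (hcover : ∀ y, ∃ l ≤ L, f^[l] y ∈ s) :
    μ univ ≤ (L + 1) * μ s :=
  calc μ univ ≤ μ (⋃ l ∈ Finset.range (L + 1), f^[l] ⁻¹' s) := measure_mono fun y _ => by
        obtain ⟨l, hl, hly⟩ := hcover y
        exact mem_biUnion (Finset.mem_range_succ_iff.mpr hl) hly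
    _ ≤ ∑ l ∈ Finset.range (L + 1), μ (f^[l] ⁻¹' s) := measure_biUnion_finset_le _ _
    _ = (L + 1) * μ s := by simp [(hf.iterate _).measure_preimage hs]

theorem ergodic_measure_ball_lower_bound_general {M : Type*} [MetricSpace M]
    [MeasurableSpace M] [BorelSpace M]
    (f : Homeomorph M M)
    (ε : ℝ) (L : ℕ)
    (hL : ∀ x y : M, ∃ l : ℕ, l ≤ L ∧ (⇑f)^[l] y ∈ Metric.ball x ε)
    (μ : Measure M) [IsProbabilityMeasure μ] (herg : Ergodic (⇑f) μ) (x : M) :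
    ((L : ENNReal) + 1)⁻¹ ≤ μ (Metric.ball x ε) ∧ 0 < ((L : ENNReal) + 1)⁻¹ := by
  refine ⟨?_, by simp⟩
  have hcover := herg.toMeasurePreserving.measure_univ_le_mul_of_forall_exists_iterate_mem
    measurableSet_ball.nullMeasurableSet L (hL x)
  rw [measure_univ] at hcover
  rwa [ENNReal.inv_le_iff_le_mul (fun _ => by simp) (by simp)]

/-- Let `(M, d)` be a compact metric space, `f : M → M` a minimal
homeomorphism, `ε > 0`, and `L ∈ ℕ` such that for all `x, y ∈ M` there exists `0 ≤ l ≤ L`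
with `f^[l] y ∈ B(x, ε)`. Then for every `f`-ergodic Borel probability measure `μ` and every
`x ∈ M`, `μ(B(x, ε)) ≥ 1/(L+1) > 0`. -/
theorem ergodic_measure_ball_lower_bound {M : Type*} [MetricSpace M] [CompactSpace M]
    [MeasurableSpace M] [BorelSpace M]
    (f : Homeomorph M M)
    (hmin : ∀ y : M, Dense {z : M | ∃ n : ℕ, (⇑f)^[n] y = z})
    (ε : ℝ) (hε : 0 < ε) (L : ℕ)
    (hL : ∀ x y : M, ∃ l : ℕ, l ≤ L ∧ (⇑f)^[l] y ∈ Metric.ball x ε)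
    (μ : Measure M) [IsProbabilityMeasure μ] (herg : Ergodic (⇑f) μ) (x : M) :
    ((L : ENNReal) + 1)⁻¹ ≤ μ (Metric.ball x ε) ∧ 0 < ((L : ENNReal) + 1)⁻¹ :=
  ergodic_measure_ball_lower_bound_general f ε L hL μ herg x
end

section
/- Let X be a set, f : X → X a map, B ⊆ X, L ∈ ℕ, and y ∈ X. Suppose that for every n ≥ 0 there exists an integer l with 0 ≤ l ≤ L and f^{n+l}(y) ∈ B. Then liminf_{n→∞} (1/n) · card{ i : 0 ≤ i < n, f^i(y) ∈ B } ≥ 1/(L+1). -/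
/-!
Every window of `L + 1` consecutive times contains a visit to `B`, so among the first `n` times
there are at least `(n - L) / (L + 1)` visits; dividing by `n` and letting `n → ∞` gives the bound.
-/

open Filter

namespace Nat

variable {p : ℕ → Prop} [DecidablePred p] {L : ℕ}

theorem ncard_setOf_lt_and_eq_count (n : ℕ) :
    {i | i < n ∧ p i}.ncard = count p n := by
  rw [count_eq_card_filter_range, ← Set.ncard_coe_finset]
  congr 1
  ext i
  simp

theorem count_lt_count_add_succ {n : ℕ} (h : ∃ l ≤ L, p (n + l)) :
    count p n < count p (n + L + 1) := by
  obtain ⟨l, hlL, hl⟩ := h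
  calc count p n ≤ count p (n + l) := count_monotone p (n.le_add_right l)
    _ < count p (n + L + 1) := count_strict_mono hl (by omega)

theorem le_mul_count_add (h : ∀ n, ∃ l ≤ L, p (n + l)) (n : ℕ) :
    n ≤ (L + 1) * count p n + L := by
  induction n using Nat.strong_induction_on with
  | _ n ih =>
    rcases Nat.lt_or_ge n (L + 1) with hn | hn
    · omega
    · obtain ⟨m, rfl⟩ : ∃ m, n = m + L + 1 := ⟨n - (L + 1), by omega⟩
      have hm := ih m (by omega)
      have := count_lt_count_add_succ (h m)
      nlinarith

theorem inv_succ_le_liminf_count_div (h : ∀ n, ∃ l ≤ L, p (n + l)) :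
    (1 : ℝ) / (L + 1) ≤ liminf (fun n : ℕ => (count p n : ℝ) / n) atTop := by
  set lower : ℕ → ℝ := fun n => (1 - L / n) / (L + 1)
  have h_lower : Tendsto lower atTop (nhds ((1 : ℝ) / (L + 1))) := by
    simpa using ((tendsto_const_nhds (x := (1 : ℝ))).sub
      (tendsto_const_div_atTop_nhds_zero_nat (L : ℝ))).div_const ((L : ℝ) + 1)
  have h_le : ∀ᶠ n : ℕ in atTop, lower n ≤ count p n / n := by
    filter_upwards [eventually_gt_atTop 0] with n hn
    have hn : (0 : ℝ) < n := by exact_mod_cast hn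
    have key : (n : ℝ) ≤ (L + 1) * count p n + L := by exact_mod_cast le_mul_count_add h n
    simp only [lower]
    rw [div_le_div_iff₀ (by positivity) hn]
    field_simp
    linarith
  have h_bdd : IsBoundedUnder (· ≤ ·) atTop fun n : ℕ => (count p n : ℝ) / n :=
    isBoundedUnder_of ⟨1, fun n =>
      div_le_one_of_le₀ (by exact_mod_cast count_le p) n.cast_nonneg⟩
  rw [← h_lower.liminf_eq]
  exact liminf_le_liminf h_le h_lower.isBoundedUnder_ge h_bdd.isCoboundedUnder_ge

end Nat

/-- Let `X` be a set, `f : X → X`, `B ⊆ X`, `L ∈ ℕ` and `y ∈ X`. Suppose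
that for every `n ≥ 0` there exists `0 ≤ l ≤ L` with `f^[n+l] y ∈ B`. Then the lower density
of visit times of the orbit of `y` to `B` is at least `1/(L+1)`. -/
theorem liminf_visit_frequency {X : Type*} (f : X → X) (B : Set X) (L : ℕ) (y : X)
    (h : ∀ n : ℕ, ∃ l : ℕ, l ≤ L ∧ f^[n + l] y ∈ B) :
    (1 : ℝ) / (L + 1) ≤
      Filter.liminf
        (fun n : ℕ => ({i : ℕ | i < n ∧ f^[i] y ∈ B}.ncard : ℝ) / n) Filter.atTop := by
  classical
  simp only [Nat.ncard_setOf_lt_and_eq_count]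
  exact Nat.inv_succ_le_liminf_count_div h
end
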